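/- arXiv:2006.10444 — 6 statements merged into one kernel-verified Lean document; each statement's English description precedes it below -/
import Mathlib

section
/- Let G be a K_{a,b}-free graph and let I be an independent set in G of size k. Suppose that for every subset D ⊆ I with |D| = a, the set of vertices of V(G)∖I whose neighborhood in I contains D induces a subgraph with no independent set of size b. Then, additionally assuming every vertex outside I with fewer than a neighbors in I is covered so that for each C ⊆ I with 1 ≤ |C| ≤ a−1 the subgraph induced by {v ∉ I : N(v)∩I = C} ∪ C has no independent set of size |C|+1, the independence number of G satisfies α(G) ≤ (a−1)·(e·k)^{a−1} + (b−1)·k^a. -/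
/-!
Charge every vertex `v` of an independent set `s` to a nonempty set `C ⊆ I` with `|C| ≤ a`:
a vertex of `I` to `{v}`, any other vertex to its neighbourhood in `I` if that has fewer than
`a` elements, and otherwise to an `a`-subset of it. The vertices charged to an `a`-set `D` form
an independent set of vertices outside `I` adjacent to all of `D`, so there are fewer than `b`
of them; those charged to a smaller `C` form an independent subset of `V_C ∪ C`, so there are at
most `|C| ≤ a - 1` of them. There are at most `k^a` sets of the first kind and
`(a - 1)·k^(a-1)` of the second, and `a - 1 ≤ e^(a-1)`.
-/

open Finset

theorem Finset.card_biUnion_powersetCard_Icc_le {α : Type*} [DecidableEq α] (I : Finset α)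
    (m : ℕ) : #((Icc 1 m).biUnion fun j => I.powersetCard j) ≤ m * #I ^ m := by
  calc #((Icc 1 m).biUnion fun j => I.powersetCard j)
      ≤ ∑ j ∈ Icc 1 m, #(I.powersetCard j) := card_biUnion_le
    _ ≤ #(Icc 1 m) • #I ^ m := by
        refine sum_le_card_nsmul _ _ _ fun j hj => ?_
        obtain ⟨hj1, hjm⟩ := mem_Icc.mp hj
        rw [card_powersetCard]
        refine (Nat.choose_le_pow _ _).trans ?_
        rcases (#I).eq_zero_or_pos with h0 | hpos
        · simp [h0, Nat.pos_iff_ne_zero.mp hj1]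
        · exact Nat.pow_le_pow_right hpos hjm
    _ = m * #I ^ m := by simp

theorem Real.natCast_mul_pow_le_exp_one_mul_pow (m k : ℕ) :
    (m : ℝ) * k ^ m ≤ (exp 1 * k) ^ m := by
  rw [mul_pow, exp_one_pow]
  gcongr
  linarith [add_one_le_exp (m : ℝ)]

namespace SimpleGraph

variable {V : Type*}

theorem IsIndepSet.card_lt_of_forall_card_ne {G : SimpleGraph V} {s : Finset V} {n : ℕ}
    (hs : G.IsIndepSet s) (h : ∀ t ⊆ s, G.IsIndepSet t → #t ≠ n) : #s < n := by
  by_contra! hn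
  obtain ⟨t, hts, rfl⟩ := exists_subset_card_eq hn
  exact h t hts (hs.mono (coe_subset.mpr hts)) rfl

variable [Fintype V] [DecidableEq V] (G : SimpleGraph V) [DecidableRel G.Adj]

/-- The set `C ⊆ I` that the vertex `v` is charged to. -/
noncomputable def anchor (I : Finset V) (a : ℕ) (v : V) : Finset V :=
  if v ∈ I then {v}
  else if h : a ≤ #(G.neighborFinset v ∩ I) then (exists_subset_card_eq h).choose
  else G.neighborFinset v ∩ I

variable {G} {I : Finset V} {a : ℕ} {v : V}

theorem anchor_of_mem (hv : v ∈ I) : G.anchor I a v = {v} := if_pos hv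

theorem anchor_subset_of_notMem (hv : v ∉ I) : G.anchor I a v ⊆ G.neighborFinset v ∩ I := by
  unfold anchor
  rw [if_neg hv]
  split_ifs with h
  exacts [(exists_subset_card_eq h).choose_spec.1, subset_rfl]

theorem card_anchor_of_notMem_of_le (hv : v ∉ I) (h : a ≤ #(G.neighborFinset v ∩ I)) :
    #(G.anchor I a v) = a := by
  unfold anchor
  rw [if_neg hv, dif_pos h]
  exact (exists_subset_card_eq h).choose_spec.2

theorem anchor_of_notMem_of_lt (hv : v ∉ I) (h : #(G.neighborFinset v ∩ I) < a) :
    G.anchor I a v = G.neighborFinset v ∩ I := by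
  unfold anchor
  rw [if_neg hv, dif_neg h.not_ge]

theorem anchor_subset : G.anchor I a v ⊆ I := by
  by_cases hv : v ∈ I
  · simpa [anchor_of_mem hv]
  · exact (anchor_subset_of_notMem hv).trans inter_subset_right

theorem card_anchor_le (ha : 1 ≤ a) : #(G.anchor I a v) ≤ a := by
  by_cases hv : v ∈ I
  · simpa [anchor_of_mem hv]
  by_cases h : a ≤ #(G.neighborFinset v ∩ I)
  · exact (card_anchor_of_notMem_of_le hv h).le
  · rw [anchor_of_notMem_of_lt hv (not_le.mp h)]
    omega

theorem anchor_nonempty (ha : 1 ≤ a) (hmax : v ∉ I → ∃ u ∈ I, G.Adj v u) :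
    (G.anchor I a v).Nonempty := by
  by_cases hv : v ∈ I
  · simp [anchor_of_mem hv]
  by_cases h : a ≤ #(G.neighborFinset v ∩ I)
  · rw [← card_pos, card_anchor_of_notMem_of_le hv h]
    omega
  · obtain ⟨u, hu, huv⟩ := hmax hv
    rw [anchor_of_notMem_of_lt hv (not_le.mp h)]
    exact ⟨u, mem_inter.mpr ⟨(G.mem_neighborFinset v u).mpr huv, hu⟩⟩

theorem notMem_of_card_anchor_eq (ha : 2 ≤ a) (h : #(G.anchor I a v) = a) : v ∉ I := by
  intro hv
  rw [anchor_of_mem hv, card_singleton] at h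
  omega

variable {s D C : Finset V} {b : ℕ}

theorem card_filter_anchor_eq_lt_of_card_eq (ha : 2 ≤ a) (hs : G.IsIndepSet s) (hDa : #D = a)
    (hD : ∀ t : Finset V, (∀ v ∈ t, v ∉ I ∧ D ⊆ G.neighborFinset v) →
      G.IsIndepSet t → #t ≠ b) :
    #{v ∈ s | G.anchor I a v = D} < b := by
  refine IsIndepSet.card_lt_of_forall_card_ne (hs.mono (coe_subset.mpr (filter_subset _ _)))
    fun t ht => hD t fun v hv => ?_
  obtain ⟨-, rfl⟩ := mem_filter.mp (ht hv)
  have hvI := notMem_of_card_anchor_eq ha hDa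
  exact ⟨hvI, (anchor_subset_of_notMem hvI).trans inter_subset_left⟩

theorem card_filter_anchor_eq_le_card_of_card_lt (hs : G.IsIndepSet s) (hCa : #C < a)
    (hC : ∀ t : Finset V, (∀ v ∈ t, (v ∉ I ∧ G.neighborFinset v ∩ I = C) ∨ v ∈ C) →
      G.IsIndepSet t → #t ≠ #C + 1) :
    #{v ∈ s | G.anchor I a v = C} ≤ #C := by
  refine Nat.lt_succ_iff.mp <| IsIndepSet.card_lt_of_forall_card_ne
    (hs.mono (coe_subset.mpr (filter_subset _ _))) fun t ht => hC t fun v hv => ?_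
  obtain ⟨-, rfl⟩ := mem_filter.mp (ht hv)
  by_cases hvI : v ∈ I
  · simp [anchor_of_mem hvI]
  · have hlt : #(G.neighborFinset v ∩ I) < a := by
      by_contra! h
      exact hCa.ne (card_anchor_of_notMem_of_le hvI h)
    exact .inl ⟨hvI, (anchor_of_notMem_of_lt hvI hlt).symm⟩

theorem card_filter_card_anchor_eq_le (ha : 2 ≤ a) (hs : G.IsIndepSet s)
    (hD : ∀ D ⊆ I, #D = a → ∀ t : Finset V, (∀ v ∈ t, v ∉ I ∧ D ⊆ G.neighborFinset v) →
      G.IsIndepSet t → #t ≠ b) :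
    #{v ∈ s | #(G.anchor I a v) = a} ≤ (b - 1) * #I ^ a := by
  have hmaps : ∀ v ∈ {v ∈ s | #(G.anchor I a v) = a}, G.anchor I a v ∈ I.powersetCard a :=
    fun v hv => mem_powersetCard.mpr ⟨anchor_subset, (mem_filter.mp hv).2⟩
  have hfiber : ∀ D ∈ I.powersetCard a,
      #{v ∈ {v ∈ s | #(G.anchor I a v) = a} | G.anchor I a v = D} ≤ b - 1 := by
    intro D hD'
    obtain ⟨hDI, hDa⟩ := mem_powersetCard.mp hD'
    refine Nat.le_sub_one_of_lt <| (card_le_card ?_).trans_lt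
      (card_filter_anchor_eq_lt_of_card_eq ha hs hDa (hD D hDI hDa))
    exact filter_subset_filter _ (filter_subset _ _)
  calc _ ≤ (b - 1) * #(I.powersetCard a) := card_le_mul_card_image_of_maps_to hmaps _ hfiber
    _ ≤ (b - 1) * #I ^ a := by
      rw [card_powersetCard]
      gcongr
      exact Nat.choose_le_pow _ _

theorem card_filter_card_anchor_ne_le (ha : 2 ≤ a) (hmax : ∀ v ∉ I, ∃ u ∈ I, G.Adj v u)
    (hs : G.IsIndepSet s)
    (hC : ∀ C ⊆ I, 1 ≤ #C → #C ≤ a - 1 → ∀ t : Finset V,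
      (∀ v ∈ t, (v ∉ I ∧ G.neighborFinset v ∩ I = C) ∨ v ∈ C) → G.IsIndepSet t → #t ≠ #C + 1) :
    #{v ∈ s | ¬#(G.anchor I a v) = a} ≤ (a - 1) * ((a - 1) * #I ^ (a - 1)) := by
  have hmaps : ∀ v ∈ {v ∈ s | ¬#(G.anchor I a v) = a},
      G.anchor I a v ∈ (Icc 1 (a - 1)).biUnion (I.powersetCard ·) := by
    intro v hv
    have hpos := card_pos.mpr (anchor_nonempty (G := G) (a := a) (by omega) (hmax v))
    have hle := card_anchor_le (G := G) (I := I) (v := v) (by omega : 1 ≤ a)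
    have hne := (mem_filter.mp hv).2
    exact mem_biUnion.mpr
      ⟨_, mem_Icc.mpr ⟨hpos, by omega⟩, mem_powersetCard.mpr ⟨anchor_subset, rfl⟩⟩
  have hfiber : ∀ C ∈ (Icc 1 (a - 1)).biUnion (I.powersetCard ·),
      #{v ∈ {v ∈ s | ¬#(G.anchor I a v) = a} | G.anchor I a v = C} ≤ a - 1 := by
    intro C hC'
    obtain ⟨j, hj, hCj⟩ := mem_biUnion.mp hC'
    obtain ⟨hCI, rfl⟩ := mem_powersetCard.mp hCj
    obtain ⟨hj1, hja⟩ := mem_Icc.mp hj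
    refine (card_le_card (filter_subset_filter _ (filter_subset _ _))).trans ?_
    exact (card_filter_anchor_eq_le_card_of_card_lt hs (by omega) (hC _ hCI hj1 hja)).trans hja
  calc _ ≤ (a - 1) * #((Icc 1 (a - 1)).biUnion (I.powersetCard ·)) :=
        card_le_mul_card_image_of_maps_to hmaps _ hfiber
    _ ≤ (a - 1) * ((a - 1) * #I ^ (a - 1)) := by
      gcongr
      exact card_biUnion_powersetCard_Icc_le I (a - 1)

theorem IsIndepSet.card_le_of_no_local_improvement (ha : 2 ≤ a)
    (hmax : ∀ v ∉ I, ∃ u ∈ I, G.Adj v u)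
    (hD : ∀ D ⊆ I, #D = a → ∀ t : Finset V, (∀ v ∈ t, v ∉ I ∧ D ⊆ G.neighborFinset v) →
      G.IsIndepSet t → #t ≠ b)
    (hC : ∀ C ⊆ I, 1 ≤ #C → #C ≤ a - 1 → ∀ t : Finset V,
      (∀ v ∈ t, (v ∉ I ∧ G.neighborFinset v ∩ I = C) ∨ v ∈ C) → G.IsIndepSet t → #t ≠ #C + 1)
    (hs : G.IsIndepSet s) :
    #s ≤ (a - 1) * ((a - 1) * #I ^ (a - 1)) + (b - 1) * #I ^ a := by
  rw [← card_filter_add_card_filter_not (s := s) fun v => #(G.anchor I a v) = a, add_comm]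
  exact add_le_add (card_filter_card_anchor_ne_le ha hmax hs hC)
    (card_filter_card_anchor_eq_le ha hs hD)

end SimpleGraph

theorem kab_free_alpha_bound_general {V : Type*} [Fintype V] [DecidableEq V]
    (G : SimpleGraph V) [DecidableRel G.Adj] (a b : ℕ) (ha : 2 ≤ a) (hb : 1 ≤ b)
    (I : Finset V) (k : ℕ)
    (hk : I.card = k)
    (hmax : ∀ v ∉ I, ∃ u ∈ I, G.Adj v u)
    (hD : ∀ D ⊆ I, D.card = a →
      ∀ s : Finset V, (∀ v ∈ s, v ∉ I ∧ D ⊆ G.neighborFinset v) →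
        ((s : Set V).Pairwise fun u v => ¬G.Adj u v) → s.card ≠ b)
    (hC : ∀ C ⊆ I, 1 ≤ C.card → C.card ≤ a - 1 →
      ∀ s : Finset V,
        (∀ v ∈ s, (v ∉ I ∧ G.neighborFinset v ∩ I = C) ∨ v ∈ C) →
        ((s : Set V).Pairwise fun u v => ¬G.Adj u v) → s.card ≠ C.card + 1) :
    ∀ s : Finset V, ((s : Set V).Pairwise fun u v => ¬G.Adj u v) →
      (s.card : ℝ) ≤ ((a : ℝ) - 1) * (Real.exp 1 * k) ^ (a - 1) + ((b : ℝ) - 1) * (k : ℝ) ^ a := by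
  intro s hs
  subst hk
  have hcount := SimpleGraph.IsIndepSet.card_le_of_no_local_improvement ha hmax hD hC hs
  have hcast : ((#s : ℕ) : ℝ) ≤ ((a - 1 : ℕ) : ℝ) * ((a - 1 : ℕ) * (#I : ℝ) ^ (a - 1))
      + ((b - 1 : ℕ) : ℝ) * (#I : ℝ) ^ a := by
    exact_mod_cast hcount
  have hexp := Real.natCast_mul_pow_le_exp_one_mul_pow (a - 1) #I
  rw [Nat.cast_pred (by omega : 0 < a)] at hcast hexp
  rw [Nat.cast_pred (by omega : 0 < b)] at hcast
  have ha1 : (0 : ℝ) ≤ a - 1 := by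
    rw [sub_nonneg, Nat.one_le_cast]
    omega
  exact hcast.trans (add_le_add_left (mul_le_mul_of_nonneg_left hexp ha1) _)

/-- Local-search bound for `K_{a,b}`-free graphs: if `I` is a maximal independent set of size
`k` such that no local improvement is possible (neither via the sets `V_C ∪ C` for small
`C ⊆ I`, nor via the sets of vertices whose neighborhood in `I` contains a fixed `a`-subset
`D`), then `α(G) ≤ (a−1)·(e·k)^(a−1) + (b−1)·k^a`. -/
theorem kab_free_alpha_bound {V : Type*} [Fintype V] [DecidableEq V]
    (G : SimpleGraph V) [DecidableRel G.Adj] (a b : ℕ) (ha : 2 ≤ a) (hb : 1 ≤ b)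
    (hfree : IsEmpty (completeBipartiteGraph (Fin a) (Fin b) ↪g G))
    (I : Finset V) (k : ℕ)
    (hI : (I : Set V).Pairwise fun u v => ¬G.Adj u v) (hk : I.card = k)
    (hmax : ∀ v ∉ I, ∃ u ∈ I, G.Adj v u)
    (hD : ∀ D ⊆ I, D.card = a →
      ∀ s : Finset V, (∀ v ∈ s, v ∉ I ∧ D ⊆ G.neighborFinset v) →
        ((s : Set V).Pairwise fun u v => ¬G.Adj u v) → s.card ≠ b)
    (hC : ∀ C ⊆ I, 1 ≤ C.card → C.card ≤ a - 1 →
      ∀ s : Finset V,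
        (∀ v ∈ s, (v ∉ I ∧ G.neighborFinset v ∩ I = C) ∨ v ∈ C) →
        ((s : Set V).Pairwise fun u v => ¬G.Adj u v) → s.card ≠ C.card + 1) :
    ∀ s : Finset V, ((s : Set V).Pairwise fun u v => ¬G.Adj u v) →
      (s.card : ℝ) ≤ ((a : ℝ) - 1) * (Real.exp 1 * k) ^ (a - 1) + ((b : ℝ) - 1) * (k : ℝ) ^ a :=
  kab_free_alpha_bound_general G a b ha hb I k hk hmax hD hC
end

section
/- Let G be a K_{a,b}-free graph, let I be an independent set in G, and let V₂ be the set of vertices outside I with at least a neighbors in I. Fix for each v ∈ V₂ a subset S(v) ⊆ N(v) ∩ I with |S(v)| = a. Then for every D ⊆ I with |D| = a, the set V_D = {v ∈ V₂ : S(v) = D} contains no independent set of G of size b. -/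
/-! Every vertex `v` of `V_D` has `D = S v ⊆ N(v)`, so an independent `b`-subset of `V_D` is
completely joined to the independent `a`-set `D`, and the two together induce `K_{a,b}`. -/

namespace SimpleGraph

variable {V α β : Type*} {G : SimpleGraph V}

theorem IsIndepSet.not_adj {s : Set V} (hs : G.IsIndepSet s) {u v : V} (hu : u ∈ s) (hv : v ∈ s) :
    ¬G.Adj u v := by
  obtain rfl | huv := eq_or_ne u v
  · exact G.irrefl
  · exact hs hu hv huv

def Embedding.completeBipartiteGraph (f : α ↪ V) (g : β ↪ V)
    (hf : ∀ i j, ¬G.Adj (f i) (f j)) (hg : ∀ i j, ¬G.Adj (g i) (g j))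
    (hfg : ∀ i j, G.Adj (f i) (g j)) : completeBipartiteGraph α β ↪g G where
  toFun := Sum.elim f g
  inj' := f.injective.sumElim g.injective fun i j => (hfg i j).ne
  map_rel_iff' := by
    rintro (i | i) (j | j)
    · simpa using hf i j
    · simpa using hfg i j
    · simpa using (hfg j i).symm
    · simpa using hg i j

theorem nonempty_completeBipartiteGraph_embedding {s t : Finset V} (hs : G.IsIndepSet s)
    (ht : G.IsIndepSet t) (hst : G.IsCompleteBetween s t) :
    Nonempty (completeBipartiteGraph (Fin s.card) (Fin t.card) ↪g G) :=
  let f : Fin s.card ↪ V := s.equivFin.symm.toEmbedding.trans (.subtype _)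
  let g : Fin t.card ↪ V := t.equivFin.symm.toEmbedding.trans (.subtype _)
  have hf i : f i ∈ s := (s.equivFin.symm i).2
  have hg j : g j ∈ t := (t.equivFin.symm j).2
  ⟨.completeBipartiteGraph f g (fun i j => hs.not_adj (hf i) (hf j))
    (fun i j => ht.not_adj (hg i) (hg j)) (fun i j => hst (hf i) (hg j))⟩

end SimpleGraph

/-- In a `K_{a,b}`-free graph with independent set `I`, for every `a`-subset `D ⊆ I`, the set
`V_D = {v ∈ V₂ : S v = D}` (where `V₂` is the set of vertices outside `I` with at least `a`
neighbors in `I`, and `S v` is a chosen `a`-subset of `N(v) ∩ I`) contains no independent set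
of size `b`. -/
theorem kab_free_VD_no_indep {V : Type*} [Fintype V] [DecidableEq V]
    (G : SimpleGraph V) [DecidableRel G.Adj] (a b : ℕ)
    (hfree : IsEmpty (completeBipartiteGraph (Fin a) (Fin b) ↪g G))
    (I : Finset V) (hI : (I : Set V).Pairwise fun u v => ¬G.Adj u v)
    (S : V → Finset V)
    (hS : ∀ v ∉ I, a ≤ (G.neighborFinset v ∩ I).card →
      S v ⊆ G.neighborFinset v ∩ I ∧ (S v).card = a)
    (D : Finset V) (hD : D ⊆ I) (hDcard : D.card = a) :
    ∀ s : Finset V,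
      (∀ v ∈ s, v ∉ I ∧ a ≤ (G.neighborFinset v ∩ I).card ∧ S v = D) →
      ((s : Set V).Pairwise fun u v => ¬G.Adj u v) → s.card < b := by
  intro s hs hsind
  by_contra! hcard
  obtain ⟨t, hts, rfl⟩ := Finset.exists_subset_card_eq hcard
  subst hDcard
  have hDt : G.IsCompleteBetween D t := by
    intro d hd v hv
    obtain ⟨hvI, hvcard, hvS⟩ := hs v (hts hv)
    have hdN := (hS v hvI hvcard).1 (hvS ▸ hd)
    exact (G.mem_neighborFinset v d).1 (Finset.mem_inter.1 hdN).1 |>.symm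
  obtain ⟨e⟩ := SimpleGraph.nonempty_completeBipartiteGraph_embedding
    (hI.mono (Finset.coe_subset.2 hD)) (hsind.mono (Finset.coe_subset.2 hts)) hDt
  exact hfree.false e
end

section
/- Let J be a graph with maximum degree at most t, let G be a graph with vertex set partitioned into sets V_i indexed by vertices i of J, where every edge of G joins V_i and V_j for some edge ij of J. Construct the graph G' whose vertices are the edges of G, with two distinct edges e ∈ E_{ij} and f ∈ E_{ij'} (where ij and ij' are edges of J sharing endpoint i) adjacent in G' whenever either ij = ij', or j ≠ j' and e and f do not share a vertex of G. Then G' contains no induced star K_{1,d} for any d ≥ 2t + 2. -/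
/-! The center of an induced star in `G'` lies over an edge `ab` of `J`. Every leaf lies over
an edge of `J` meeting `ab`, and distinct leaves lie over distinct edges of `J`, because two
edges of `G` over the same edge of `J` are adjacent in `G'`. So there are at most
`deg a + deg b ≤ 2t` leaves. -/

/-- The edge-conflict graph `G'` of a colored subgraph isomorphism instance: vertices are the
edges of `G`; two distinct edges are adjacent iff they lie between the same pair of color
classes, or their class-pairs share an index and the edges are vertex-disjoint. -/
def edgeConflictGraph {V ι : Type*} (G : SimpleGraph V) (part : V → ι) :
    SimpleGraph {e : Sym2 V // e ∈ G.edgeSet} :=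
  SimpleGraph.fromRel fun e f =>
    Sym2.map part e.1 = Sym2.map part f.1 ∨
      ((∃ i, i ∈ Sym2.map part e.1 ∧ i ∈ Sym2.map part f.1) ∧
        Sym2.map part e.1 ≠ Sym2.map part f.1 ∧ ∀ x ∈ e.1, ¬ x ∈ f.1)

namespace SimpleGraph

theorem card_le_degree_add_degree_of_forall_mem {ι : Type*} (J : SimpleGraph ι) (a b : ι)
    [Fintype (J.neighborSet a)] [Fintype (J.neighborSet b)] (s : Finset (Sym2 ι))
    (hs : ∀ e ∈ s, e ∈ J.edgeSet ∧ (a ∈ e ∨ b ∈ e)) :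
    s.card ≤ J.degree a + J.degree b := by
  classical
  have hsub : s ⊆ J.incidenceFinset a ∪ J.incidenceFinset b := by
    intro e he
    obtain ⟨hJ, ha | hb⟩ := hs e he
    · exact Finset.mem_union_left _ ((J.mem_incidenceFinset a e).2 ⟨hJ, ha⟩)
    · exact Finset.mem_union_right _ ((J.mem_incidenceFinset b e).2 ⟨hJ, hb⟩)
  calc s.card ≤ (J.incidenceFinset a ∪ J.incidenceFinset b).card := Finset.card_le_card hsub
    _ ≤ (J.incidenceFinset a).card + (J.incidenceFinset b).card := Finset.card_union_le _ _
    _ = J.degree a + J.degree b := by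
      rw [card_incidenceFinset_eq_degree, card_incidenceFinset_eq_degree]

end SimpleGraph

namespace edgeConflictGraph

variable {V ι : Type*} {G : SimpleGraph V} {part : V → ι} {e f : {e : Sym2 V // e ∈ G.edgeSet}}

theorem exists_mem_of_adj (h : (edgeConflictGraph G part).Adj e f) :
    ∃ i, i ∈ Sym2.map part e.1 ∧ i ∈ Sym2.map part f.1 := by
  obtain ⟨-, (heq | ⟨hmeet, -⟩) | (heq | ⟨⟨i, hf, he⟩, -⟩)⟩ := h
  · exact ⟨_, Sym2.out_fst_mem _, heq ▸ Sym2.out_fst_mem _⟩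
  · exact hmeet
  · exact ⟨_, heq ▸ Sym2.out_fst_mem _, Sym2.out_fst_mem _⟩
  · exact ⟨i, he, hf⟩

theorem map_ne_of_not_adj (hne : e ≠ f) (h : ¬(edgeConflictGraph G part).Adj e f) :
    Sym2.map part e.1 ≠ Sym2.map part f.1 :=
  fun heq => h ⟨hne, Or.inl (Or.inl heq)⟩

end edgeConflictGraph

open edgeConflictGraph in
/-- If `J` has maximum degree at most `t` and every edge of `G` joins classes `V_i`, `V_j`
with `ij ∈ E(J)`, then the edge-conflict graph `G'` contains no induced star `K_{1,d}` for
any `d ≥ 2t + 2`. -/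
theorem edgeConflictGraph_star_free {V ι : Type*} [Fintype ι]
    (G : SimpleGraph V) (J : SimpleGraph ι) [DecidableRel J.Adj]
    (t : ℕ) (hdeg : ∀ i, J.degree i ≤ t)
    (part : V → ι) (hpart : ∀ u v : V, G.Adj u v → J.Adj (part u) (part v))
    (d : ℕ) (hd : 2 * t + 2 ≤ d) :
    IsEmpty (completeBipartiteGraph Unit (Fin d) ↪g edgeConflictGraph G part) := by
  classical
  refine ⟨fun φ => ?_⟩
  let π : G →g J := ⟨part, hpart _ _⟩
  let leafClass : Fin d → Sym2 ι := fun k => (φ (Sum.inr k)).1.map part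
  have hinj : Function.Injective leafClass := fun k k' heq => by
    by_contra hkk
    refine map_ne_of_not_adj (fun h => hkk (Sum.inr_injective (φ.injective h))) ?_ heq
    simp [φ.map_adj_iff]
  obtain ⟨u, v, hcenter⟩ : ∃ u v, (φ (Sum.inl ())).1 = s(u, v) := Sym2.exists.1 ⟨_, rfl⟩
  have hleaf : ∀ e ∈ Finset.univ.image leafClass,
      e ∈ J.edgeSet ∧ (part u ∈ e ∨ part v ∈ e) := by
    simp only [Finset.mem_image, Finset.mem_univ, true_and, forall_exists_index]
    rintro _ k rfl
    obtain ⟨i, hi, hik⟩ := exists_mem_of_adj (φ.map_adj_iff.2 (by simp) :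
      (edgeConflictGraph G part).Adj (φ (Sum.inl ())) (φ (Sum.inr k)))
    rw [hcenter, Sym2.map_mk, Sym2.mem_iff] at hi
    refine ⟨π.map_mem_edgeSet (φ (Sum.inr k)).2, ?_⟩
    rcases hi with rfl | rfl
    exacts [Or.inl hik, Or.inr hik]
  have hcard := J.card_le_degree_add_degree_of_forall_mem _ _ _ hleaf
  rw [Finset.card_image_of_injective _ hinj, Finset.card_univ, Fintype.card_fin] at hcard
  have := hdeg (part u)
  have := hdeg (part v)
  omega
end

section
/- With G' the edge-conflict graph as above: if G' has an independent set S of size k, then there is an assignment φ with φ(i) ∈ V_i for each vertex i of J that satisfies at least k edges of J, i.e., φ(i)φ(j) ∈ E(G) for at least k edges ij ∈ E(J). -/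
/-!
Two edges of `G` that are not in conflict and contain vertices `x`, `y` of the same class must
meet, say in `z`; if `z` were in another class than `x`, both edges would join the same two
classes, which is a conflict. So `x = z = y`: on the union of an independent set of `G'` the
class map is injective, and any section `φ` of the class map extending its inverse there maps
each edge class `part(e)`, `e ∈ S`, back to the edge `e` of `G`. Distinct edges of `S` give
distinct edges of `J`.
-/

theorem Sym2.map_eq_of_mem_of_apply_ne {α β : Type*} {f : α → β} {e : Sym2 α} {x z : α}
    (hx : x ∈ e) (hz : z ∈ e) (hne : f x ≠ f z) : e.map f = s(f x, f z) := by
  rw [(Sym2.mem_and_mem_iff fun h => hne (congrArg f h)).mp ⟨hx, hz⟩, Sym2.map_mk]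

theorem Function.Surjective.exists_rightInverse_leftInvOn {α β : Type*} {f : α → β}
    (hf : Function.Surjective f) {A : Set α} (hA : A.InjOn f) :
    ∃ g : β → α, Function.RightInverse g f ∧ A.LeftInvOn g f := by
  classical
  refine ⟨fun b => if h : ∃ a ∈ A, f a = b then h.choose else Function.surjInv hf b, ?_, ?_⟩
  · intro b
    dsimp only
    split_ifs with h
    exacts [h.choose_spec.2, Function.surjInv_eq hf b]
  · intro a ha
    have h : ∃ a' ∈ A, f a' = f a := ⟨a, ha, rfl⟩
    simp only [dif_pos h]
    exact hA h.choose_spec.1 ha h.choose_spec.2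

namespace edgeConflictGraph

variable {V ι : Type*} {G : SimpleGraph V} {part : V → ι}

theorem injOn_part_of_mem_edgeSet (hpart : ∀ ⦃u v⦄, G.Adj u v → part u ≠ part v)
    {e : Sym2 V} (he : e ∈ G.edgeSet) : {x | x ∈ e}.InjOn part := by
  intro x hx y hy hxy
  by_contra hne
  rw [(Sym2.mem_and_mem_iff hne).mp ⟨hx, hy⟩] at he
  exact hpart he hxy

theorem eq_of_not_adj (hpart : ∀ ⦃u v⦄, G.Adj u v → part u ≠ part v)
    {e f : {e : Sym2 V // e ∈ G.edgeSet}} (hef : ¬(edgeConflictGraph G part).Adj e f)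
    {x y : V} (hx : x ∈ e.1) (hy : y ∈ f.1) (hxy : part x = part y) : x = y := by
  obtain rfl | hne := eq_or_ne e f
  · exact injOn_part_of_mem_edgeSet hpart e.2 hx hy hxy
  simp only [edgeConflictGraph, SimpleGraph.fromRel_adj, not_and, not_or] at hef
  obtain ⟨⟨hclass, hmeet⟩, -⟩ := hef hne
  have hshared : ∃ i, i ∈ e.1.map part ∧ i ∈ f.1.map part :=
    ⟨part x, Sym2.mem_map.mpr ⟨x, hx, rfl⟩, Sym2.mem_map.mpr ⟨y, hy, hxy.symm⟩⟩
  obtain ⟨z, hze, hzf⟩ : ∃ z ∈ e.1, z ∈ f.1 := by simpa using hmeet hshared hclass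
  have hzx : part z = part x := by
    by_contra hzx
    apply hclass
    rw [Sym2.map_eq_of_mem_of_apply_ne hx hze (Ne.symm hzx),
      Sym2.map_eq_of_mem_of_apply_ne hy hzf (hxy ▸ Ne.symm hzx), hxy]
  calc x = z := (injOn_part_of_mem_edgeSet hpart e.2 hze hx hzx).symm
    _ = y := injOn_part_of_mem_edgeSet hpart f.2 hzf hy (hzx.trans hxy)

theorem injOn_part_of_pairwise_not_adj (hpart : ∀ ⦃u v⦄, G.Adj u v → part u ≠ part v)
    {S : Set {e : Sym2 V // e ∈ G.edgeSet}}
    (hS : S.Pairwise fun e f => ¬(edgeConflictGraph G part).Adj e f) :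
    {x | ∃ e ∈ S, x ∈ e.1}.InjOn part := by
  rintro x ⟨e, he, hx⟩ y ⟨f, hf, hy⟩ hxy
  have hef : ¬(edgeConflictGraph G part).Adj e f := by
    obtain rfl | hne := eq_or_ne e f
    exacts [SimpleGraph.irrefl _, hS he hf hne]
  exact eq_of_not_adj hpart hef hx hy hxy

end edgeConflictGraph

/-- If the edge-conflict graph has an independent set of size `k`, then there is an
assignment `φ` with `φ i ∈ V_i` satisfying at least `k` edges of `J`. -/
theorem assignment_of_edgeConflictGraph_indep {V : Type*} {ℓ : ℕ}
    (G : SimpleGraph V) (J : SimpleGraph (Fin ℓ))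
    (part : V → Fin ℓ) (hpart : ∀ u v : V, G.Adj u v → J.Adj (part u) (part v))
    (hsurj : ∀ i : Fin ℓ, ∃ v : V, part v = i)
    (S : Set {e : Sym2 V // e ∈ G.edgeSet}) (k : ℕ)
    (hS : S.Pairwise fun e f => ¬(edgeConflictGraph G part).Adj e f)
    (hcard : S.ncard = k) :
    ∃ φ : Fin ℓ → V, (∀ i, part (φ i) = i) ∧
      k ≤ ({e | e ∈ J.edgeSet ∧ Sym2.map φ e ∈ G.edgeSet} : Set (Sym2 (Fin ℓ))).ncard := by
  let partHom : G →g J := ⟨part, hpart _ _⟩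
  obtain ⟨φ, hφ, hφS⟩ := Function.Surjective.exists_rightInverse_leftInvOn hsurj
    (edgeConflictGraph.injOn_part_of_pairwise_not_adj (fun u v h => (hpart u v h).ne) hS)
  have hback : ∀ e ∈ S, (e.1.map part).map φ = e.1 := fun e he => by
    rw [Sym2.map_map, Sym2.map_congr (f := φ ∘ part) (g := id) fun x hx => hφS ⟨e, he, hx⟩,
      Sym2.map_id, id_eq]
  refine ⟨φ, hφ, hcard ▸ Set.ncard_le_ncard_of_injOn (fun e => e.1.map part) ?_ ?_⟩
  · intro e he
    exact ⟨partHom.map_mem_edgeSet e.2, (hback e he).symm ▸ e.2⟩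
  · intro e he f hf hef
    exact Subtype.ext ((hback e he).symm.trans ((congrArg (Sym2.map φ) hef).trans (hback f hf)))
end

section
/- (Erdős–Gallai) A sequence of non-negative integers d₁ ≥ d₂ ≥ … ≥ d_n is the degree sequence of a simple graph on n vertices if d₁ + … + d_n is even and for every 1 ≤ k ≤ n, ∑_{i=1}^k d_i ≤ k(k−1) + ∑_{i=k+1}^n min(d_i, k). -/
/-!
Induction on the degree sum, following Choudum. Let `w` be the last index with `d w > 0` and `t`
the last index below `w` with `d t = d 0`. Lowering `d t` and `d w` by one keeps the sequence
non-increasing with even sum, and it keeps the Erdős–Gallai inequalities: for `k ≤ t` this uses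
the parity of the sum when `d 0 ≤ k`, and the inequality at `t + 1` when `d w ≤ k < d 0`.
A realization of the lowered sequence becomes one of `d` by adding the edge `tw`. If that edge is
already present, then `t`, of degree `d 0 - 1 < w` (the inequality at `k = 1` gives `d 0 ≤ w`),
misses some `x < w`; as `x` has larger degree than `w`, it has a neighbour `y` not adjacent to
`w`, and replacing the edge `xy` by `tx` and `wy` does the job.
-/

open Finset

theorem Nat.exists_lt_and_not_succ {P : ℕ → Prop} {n : ℕ} (h0 : P 0) (hn : ¬ P n) :
    ∃ j < n, P j ∧ ¬ P (j + 1) := by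
  induction n with
  | zero => exact absurd h0 hn
  | succ n ih =>
    by_cases h : P n
    · exact ⟨n, n.lt_succ_self, h, hn⟩
    · obtain ⟨j, hj, hPj, hPj'⟩ := ih h
      exact ⟨j, hj.trans n.lt_succ_self, hPj, hPj'⟩

namespace SimpleGraph

variable {V : Type*} [Finite V] (G : SimpleGraph V)

lemma ncard_neighborSet_sup_edge [DecidableEq V] {s t : V} (hne : s ≠ t) (hn : ¬ G.Adj s t)
    (v : V) :
    ((G ⊔ edge s t).neighborSet v).ncard =
      (G.neighborSet v).ncard + (if v = s then 1 else 0) + (if v = t then 1 else 0) := by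
  by_cases hs : v = s
  · subst hs
    have : (G ⊔ edge v t).neighborSet v = insert t (G.neighborSet v) := by
      ext u; by_cases hu : u = t <;> simp [edge_adj, hu, hne]
    rw [this, Set.ncard_insert_of_notMem (show t ∉ G.neighborSet v from hn), if_pos rfl,
      if_neg hne]
  by_cases ht : v = t
  · subst ht
    have : (G ⊔ edge s v).neighborSet v = insert s (G.neighborSet v) := by
      ext u; by_cases hu : u = s <;> simp [edge_adj, hu, hne.symm]
    rw [this, Set.ncard_insert_of_notMem (show s ∉ G.neighborSet v from fun h => hn h.symm),
      if_neg hs, if_pos rfl]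
  · have : (G ⊔ edge s t).neighborSet v = G.neighborSet v := by
      ext u; simp [edge_adj, hs, ht]
    rw [this, if_neg hs, if_neg ht, add_zero, add_zero]

lemma ncard_neighborSet_eq_sdiff_edge [DecidableEq V] {x y : V} (h : G.Adj x y) (v : V) :
    (G.neighborSet v).ncard = ((G \ edge x y).neighborSet v).ncard +
      (if v = x then 1 else 0) + (if v = y then 1 else 0) := by
  rw [← ncard_neighborSet_sup_edge _ h.ne (by simp [sdiff_adj, edge_adj, h.ne]),
    sdiff_sup_cancel ((edge_le_iff G).2 (Or.inr h))]

lemma exists_adj_ne_not_adj {t w x : V} (hwt : G.Adj w t) (hxt : ¬ G.Adj x t)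
    (hdeg : (G.neighborSet w).ncard < (G.neighborSet x).ncard) :
    ∃ y, G.Adj x y ∧ y ≠ w ∧ ¬ G.Adj w y := by
  by_contra! h
  have hsub : G.neighborSet x ⊆ insert w (G.neighborSet w \ {t}) := by
    intro y hy
    by_cases hyw : y = w
    · exact Or.inl hyw
    · exact Or.inr ⟨h y hy hyw, fun hyt => hxt (hyt ▸ hy)⟩
  have hle := (Set.ncard_le_ncard hsub).trans (Set.ncard_insert_le _ _)
  rw [Set.ncard_sdiff_singleton_of_mem (show t ∈ G.neighborSet w from hwt)] at hle
  have : 0 < (G.neighborSet w).ncard := (Set.ncard_pos (Set.toFinite _)).2 ⟨t, hwt⟩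
  omega

lemma exists_ncard_neighborSet_eq_add_of_adj [DecidableEq V] {t w x : V} (htw : G.Adj t w)
    (hxt : x ≠ t) (htx : ¬ G.Adj t x)
    (hdeg : (G.neighborSet w).ncard < (G.neighborSet x).ncard) :
    ∃ H : SimpleGraph V, ∀ v, (H.neighborSet v).ncard =
      (G.neighborSet v).ncard + (if v = t then 1 else 0) + (if v = w then 1 else 0) := by
  obtain ⟨y, hxy, hyw, hwy⟩ := G.exists_adj_ne_not_adj htw.symm (fun h => htx h.symm) hdeg
  have hwx : w ≠ x := by rintro rfl; exact lt_irrefl _ hdeg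
  refine ⟨G \ edge x y ⊔ edge t x ⊔ edge w y, fun v => ?_⟩
  have h₁ := (G \ edge x y).ncard_neighborSet_sup_edge hxt.symm (by simp [sdiff_adj, htx]) v
  have h₂ := (G \ edge x y ⊔ edge t x).ncard_neighborSet_sup_edge hyw.symm
    (by simp [sdiff_adj, edge_adj, hwy, htw.ne', hwx]) v
  have h₃ := G.ncard_neighborSet_eq_sdiff_edge hxy v
  omega

lemma exists_ncard_neighborSet_eq_add [DecidableEq V] {t w : V} (S : Set V) (htw : t ≠ w)
    (ht : t ∉ S) (hw : w ∈ S)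
    (hS : ∀ x ∈ S, x ≠ w → (G.neighborSet w).ncard < (G.neighborSet x).ncard)
    (hdeg : (G.neighborSet t).ncard < S.ncard) :
    ∃ H : SimpleGraph V, ∀ v, (H.neighborSet v).ncard =
      (G.neighborSet v).ncard + (if v = t then 1 else 0) + (if v = w then 1 else 0) := by
  by_cases hadj : G.Adj t w
  · obtain ⟨x, hxS, htx⟩ : ∃ x ∈ S, ¬ G.Adj t x := by
      by_contra! h
      exact (Set.ncard_le_ncard h).not_gt hdeg
    have hxw : x ≠ w := by rintro rfl; exact htx hadj
    exact G.exists_ncard_neighborSet_eq_add_of_adj hadj (by rintro rfl; exact ht hxS) htx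
      (hS x hxS hxw)
  · exact ⟨G ⊔ edge t w, G.ncard_neighborSet_sup_edge htw hadj⟩

end SimpleGraph

def ErdosGallaiCondition (n : ℕ) (e : ℕ → ℕ) : Prop :=
  ∀ k ≤ n, ∑ i ∈ range k, e i ≤ k * (k - 1) + ∑ i ∈ Ico k n, min (e i) k

def lowerAt (t w : ℕ) (e : ℕ → ℕ) (i : ℕ) : ℕ :=
  if i = t ∨ i = w then e i - 1 else e i

section

variable {t w n k : ℕ} {e : ℕ → ℕ}

@[simp] lemma lowerAt_left : lowerAt t w e t = e t - 1 := if_pos (Or.inl rfl)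

@[simp] lemma lowerAt_right : lowerAt t w e w = e w - 1 := if_pos (Or.inr rfl)

lemma lowerAt_of_ne {i : ℕ} (ht : i ≠ t) (hw : i ≠ w) : lowerAt t w e i = e i :=
  if_neg (by tauto)

lemma lowerAt_le (i : ℕ) : lowerAt t w e i ≤ e i := by
  unfold lowerAt
  split_ifs <;> omega

lemma lowerAt_add_ite (htw : t ≠ w) (ht : 0 < e t) (hw : 0 < e w) (i : ℕ) :
    lowerAt t w e i + (if i = t then 1 else 0) + (if i = w then 1 else 0) = e i := by
  unfold lowerAt
  split_ifs <;> subst_vars <;> omega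

lemma sum_lowerAt_add (htw : t ≠ w) (ht : 0 < e t) (hw : 0 < e w) (s : Finset ℕ) :
    ∑ i ∈ s, lowerAt t w e i + (if t ∈ s then 1 else 0) + (if w ∈ s then 1 else 0) =
      ∑ i ∈ s, e i := by
  rw [← sum_ite_eq' s t (fun _ => 1), ← sum_ite_eq' s w (fun _ => 1), ← sum_add_distrib,
    ← sum_add_distrib]
  exact sum_congr rfl fun i _ => lowerAt_add_ite htw ht hw i

lemma sum_min_le_sum_min_lowerAt (s : Finset ℕ) (k : ℕ) :
    ∑ i ∈ s, min (e i) k ≤ ∑ i ∈ s, min (lowerAt t w e i) k +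
      (if t ∈ s ∧ e t ≤ k then 1 else 0) + (if w ∈ s ∧ e w ≤ k then 1 else 0) := by
  simp only [ite_and]
  rw [← sum_ite_eq' s t (fun _ => if e t ≤ k then 1 else 0),
    ← sum_ite_eq' s w (fun _ => if e w ≤ k then 1 else 0), ← sum_add_distrib,
    ← sum_add_distrib]
  refine sum_le_sum fun i _ => ?_
  unfold lowerAt
  split_ifs <;> subst_vars <;> omega

lemma antitone_lowerAt (hanti : Antitone e) (hgap : ∀ j, t < j → j < w → e j < e t)
    (hzero : ∀ j, w < j → e j = 0) : Antitone (lowerAt t w e) := by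
  intro i j hij
  have hji := hanti hij
  have key : i = t ∨ i = w → ¬ (j = t ∨ j = w) → e j ≤ e i - 1 := by
    rintro (rfl | rfl) hj
    · rcases lt_or_gt_of_ne (show j ≠ w by tauto) with hjw | hjw
      · have := hgap j (by omega) hjw; omega
      · rw [hzero j hjw]; exact Nat.zero_le _
    · rw [hzero j (by omega)]; exact Nat.zero_le _
  unfold lowerAt
  split_ifs <;> omega

lemma apply_eq_apply_zero_of_le (hanti : Antitone e) (htop : e t = e 0) {i : ℕ} (hi : i ≤ t) :
    e i = e 0 :=
  le_antisymm (hanti (Nat.zero_le i)) (htop ▸ hanti hi)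

lemma sum_range_eq_mul_of_le (hanti : Antitone e) (htop : e t = e 0) {m : ℕ} (hm : m ≤ t + 1) :
    ∑ i ∈ range m, e i = m * e 0 := by
  rw [sum_const_nat fun i hi => apply_eq_apply_zero_of_le hanti htop
    (by have := mem_range.1 hi; omega), card_range]

lemma sum_range_add_two_le_of_even (hanti : Antitone e) (htop : e t = e 0) (hkt : k ≤ t)
    (htw : t < w) (hwn : w < n) (hw : 0 < e w) (hek : e 0 ≤ k)
    (heven : Even (∑ i ∈ range n, e i)) :
    ∑ i ∈ range k, e i + 2 ≤ k * (k - 1) + ∑ i ∈ Ico k n, min (e i) k := by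
  have hwt : e w ≤ e t := hanti htw.le
  have hhead := sum_range_eq_mul_of_le hanti htop (m := k) (by omega)
  have htail : ∑ i ∈ Ico k n, min (e i) k = ∑ i ∈ Ico k n, e i :=
    sum_congr rfl fun i _ => min_eq_left ((hanti (Nat.zero_le i)).trans hek)
  have hpair : e t + e w ≤ ∑ i ∈ Ico k n, e i := by
    rw [← sum_pair htw.ne]
    refine sum_le_sum_of_subset fun i hi => mem_Ico.2 ?_
    rw [mem_insert, mem_singleton] at hi
    omega
  have hsplit := sum_range_add_sum_Ico e (show k ≤ n by omega)
  have hmul : (k - 1) * e 0 ≤ k * (k - 1) := (Nat.mul_le_mul_left _ hek).trans_eq (mul_comm _ _)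
  have hk : (k - 1) * e 0 + e 0 = k * e 0 := by
    rw [Nat.sub_one_mul, Nat.sub_add_cancel (Nat.le_mul_of_pos_left _ (by omega))]
  -- The slack is positive as `t` and `w` lie in the tail, and even as `∑ e` and `k (k - 1)` are.
  obtain ⟨a, ha⟩ := Nat.even_mul_pred_self k
  obtain ⟨b, hb⟩ := heven
  omega

lemma ErdosGallaiCondition.sum_range_lt (hEG : ErdosGallaiCondition n e) (hanti : Antitone e)
    (htop : e t = e 0) (hkt : k ≤ t) (htw : t < w) (hwn : w < n) (hw : 0 < e w) (hwk : e w ≤ k)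
    (hk0 : k < e 0) :
    ∑ i ∈ range k, e i < k * (k - 1) + ∑ i ∈ Ico k n, min (e i) k := by
  obtain ⟨T, hT⟩ : ∃ T, ∑ i ∈ Ico (t + 1) n, min (e i) k = T := ⟨_, rfl⟩
  obtain ⟨c, hc⟩ : ∃ c, #{i ∈ Ico (t + 1) n | k < e i} = c := ⟨_, rfl⟩
  obtain ⟨m, hm⟩ : ∃ m, t + 1 = k + m := ⟨t + 1 - k, by omega⟩
  have htail : ∑ i ∈ Ico k n, min (e i) k = m * k + T := by
    rw [← sum_Ico_consecutive _ (show k ≤ t + 1 by omega) (show t + 1 ≤ n by omega),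
      sum_const_nat fun i hi => ?_, Nat.card_Ico, hT, show t + 1 - k = m by omega]
    rw [apply_eq_apply_zero_of_le hanti htop (by have := mem_Ico.1 hi; omega)]
    exact min_eq_right hk0.le
  have hTlow : k * c + e w ≤ T := by
    rw [← hT, ← sum_filter_add_sum_filter_not (Ico (t + 1) n) (fun i => k < e i)]
    gcongr
    · rw [sum_const_nat fun i hi => min_eq_right (mem_filter.1 hi).2.le, hc, mul_comm]
    · rw [← min_eq_left hwk]
      exact single_le_sum (f := fun i => min (e i) k) (fun _ _ => Nat.zero_le _)
        (mem_filter.2 ⟨mem_Ico.2 ⟨by omega, hwn⟩, not_lt.2 hwk⟩)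
  have hTup : ∑ i ∈ Ico (t + 1) n, min (e i) (t + 1) ≤ T + c * m := by
    calc ∑ i ∈ Ico (t + 1) n, min (e i) (t + 1)
        ≤ ∑ i ∈ Ico (t + 1) n, (min (e i) k + if k < e i then m else 0) :=
          sum_le_sum fun i _ => by split_ifs <;> omega
      _ = T + c * m := by rw [sum_add_distrib, ← sum_filter, sum_const, smul_eq_mul, hT, hc]
  have hEGt := hEG (t + 1) (by omega)
  rw [sum_range_eq_mul_of_le hanti htop le_rfl, Nat.add_sub_cancel] at hEGt
  rw [sum_range_eq_mul_of_le hanti htop (by omega), htail]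
  -- Equality at `k` would mean `T = k (e 0 - t)`, and then the inequality at `t + 1` gives
  -- `e 0 - t ≤ c`, so `T ≤ k c`.
  by_contra! h
  have hk : 1 ≤ k := by omega
  zify [hk] at h hEGt hTup hTlow hm
  have h₁ : (m : ℤ) * (e 0 - t) ≤ m * c := by nlinarith
  have h₂ : (e 0 - t : ℤ) ≤ c := le_of_mul_le_mul_left h₁ (by omega)
  nlinarith

theorem ErdosGallaiCondition.lowerAt (hEG : ErdosGallaiCondition n e) (hanti : Antitone e)
    (htop : e t = e 0) (htw : t < w) (hwn : w < n) (hw : 0 < e w)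
    (heven : Even (∑ i ∈ range n, e i)) : ErdosGallaiCondition n (lowerAt t w e) := by
  intro k hkn
  have hwt : e w ≤ e t := hanti htw.le
  have hhead := sum_lowerAt_add htw.ne (hw.trans_le hwt) hw (range k)
  have htail := sum_min_le_sum_min_lowerAt (t := t) (w := w) (e := e) (Ico k n) k
  have hk := hEG k hkn
  simp only [mem_range, mem_Ico] at hhead htail
  rcases lt_or_ge t k with htk | hkt
  · split_ifs at hhead htail <;> omega
  rcases le_or_gt (e 0) k with h0k | hk0
  · have := sum_range_add_two_le_of_even hanti htop hkt htw hwn hw h0k heven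
    split_ifs at hhead htail <;> omega
  rcases le_or_gt (e w) k with hwk | hkw
  · have := hEG.sum_range_lt hanti htop hkt htw hwn hw hwk hk0
    split_ifs at hhead htail <;> omega
  · split_ifs at hhead htail <;> omega

lemma ErdosGallaiCondition.apply_zero_le (hEG : ErdosGallaiCondition n e) (hwn : w < n)
    (hzero : ∀ j, w < j → e j = 0) : e 0 ≤ w := by
  have hz : ∑ i ∈ Ico (w + 1) n, min (e i) 1 = 0 := sum_eq_zero fun i hi => by
    rw [hzero i (mem_Ico.1 hi).1]; rfl
  have h := hEG 1 (by omega)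
  rw [sum_range_one, Nat.sub_self, mul_zero, zero_add, ← sum_Ico_consecutive _
    (show 1 ≤ w + 1 by omega) (show w + 1 ≤ n by omega), hz, add_zero] at h
  calc e 0 ≤ ∑ i ∈ Ico 1 (w + 1), min (e i) 1 := h
    _ ≤ #(Ico 1 (w + 1)) • 1 := sum_le_card_nsmul _ _ _ fun _ _ => min_le_right _ _
    _ = w := by simp

def IsGraphic (n : ℕ) (e : ℕ → ℕ) : Prop :=
  ∃ G : SimpleGraph (Fin n), ∀ i : Fin n, (G.neighborSet i).ncard = e i

lemma IsGraphic.of_lowerAt (h : IsGraphic n (lowerAt t w e)) (htw : t < w) (hwn : w < n)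
    (hw : 0 < e w) (hle : ∀ j < w, e w ≤ e j) (hdeg : e t ≤ w) : IsGraphic n e := by
  obtain ⟨G, hG⟩ := h
  have ht : 0 < e t := hw.trans_le (hle t htw)
  let tF : Fin n := ⟨t, htw.trans hwn⟩
  let wF : Fin n := ⟨w, hwn⟩
  have hG' : ∀ v : Fin n, (G.neighborSet v).ncard + (if v = tF then 1 else 0) +
      (if v = wF then 1 else 0) = e v := fun v => by
    simpa only [hG, Fin.ext_iff] using lowerAt_add_ite htw.ne ht hw v
  have hwt : wF ≠ tF := by simp [tF, wF, Fin.ext_iff, htw.ne']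
  have hGt : (G.neighborSet tF).ncard = e t - 1 := (hG tF).trans lowerAt_left
  have hGw : (G.neighborSet wF).ncard = e w - 1 := (hG wF).trans lowerAt_right
  have hS : ∀ x ∈ ((Iic wF).erase tF : Set (Fin n)), x ≠ wF →
      (G.neighborSet wF).ncard < (G.neighborSet x).ncard := by
    intro x hx hxw
    simp only [coe_erase, Set.mem_sdiff, mem_coe, mem_Iic, Set.mem_singleton_iff] at hx
    have hxw' : (x : ℕ) < w := lt_of_le_of_ne hx.1 fun h => hxw (Fin.ext h)
    rw [hGw, hG, lowerAt_of_ne (fun h => hx.2 (Fin.ext h)) hxw'.ne]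
    have := hle x hxw'
    omega
  have hcard : (G.neighborSet tF).ncard < ((Iic wF).erase tF : Set (Fin n)).ncard := by
    rw [Set.ncard_coe_finset, card_erase_of_mem (by simp [tF, wF]; omega), Fin.card_Iic, hGt]
    change e t - 1 < w + 1 - 1
    omega
  obtain ⟨H, hH⟩ :=
    G.exists_ncard_neighborSet_eq_add _ hwt.symm (by simp) (by simp [hwt]) hS hcard
  exact ⟨H, fun v => (hH v).trans (hG' v)⟩

theorem ErdosGallaiCondition.isGraphic (hEG : ErdosGallaiCondition n e) (hanti : Antitone e)
    (hzero : ∀ i, n ≤ i → e i = 0) (heven : Even (∑ i ∈ range n, e i)) :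
    IsGraphic n e := by
  induction hs : ∑ i ∈ range n, e i using Nat.strong_induction_on generalizing e with
  | _ s ih =>
  obtain he0 | he0 := (e 0).eq_zero_or_pos
  · refine ⟨⊥, fun i => ?_⟩
    rw [SimpleGraph.neighborSet_bot, Set.ncard_empty]
    exact (Nat.eq_zero_of_le_zero (he0 ▸ hanti (Nat.zero_le _))).symm
  obtain ⟨w, hwn, hw, hw1⟩ :=
    Nat.exists_lt_and_not_succ (P := fun i => 0 < e i) (n := n) he0 (by simp [hzero n le_rfl])
  have hwzero : ∀ j, w < j → e j = 0 := fun j hj =>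
    Nat.eq_zero_of_le_zero ((hanti hj).trans (not_lt.1 hw1))
  have h0w := hEG.apply_zero_le hwn hwzero
  obtain ⟨t, htw, ⟨htop, -⟩, ht1⟩ := Nat.exists_lt_and_not_succ
    (P := fun i => e i = e 0 ∧ i < w) (n := w) ⟨rfl, by omega⟩ (by simp)
  have hgap : ∀ j, t < j → j < w → e j < e t := fun j htj hjw => by
    have h₁ : e j ≤ e (t + 1) := hanti htj
    have h₂ : e (t + 1) ≤ e 0 := hanti (Nat.zero_le _)
    have h₃ : e (t + 1) ≠ e 0 := fun h => ht1 ⟨h, by omega⟩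
    omega
  have hsum := sum_lowerAt_add htw.ne (hw.trans_le (hanti htw.le)) hw (range n)
  simp only [mem_range, lt_of_lt_of_le htw hwn.le, hwn, if_true] at hsum
  refine IsGraphic.of_lowerAt (ih _ (by omega) (hEG.lowerAt hanti htop htw hwn hw (hs ▸ heven))
    (antitone_lowerAt hanti hgap hwzero) (fun i hi => ?_) ?_ rfl) htw hwn hw
    (fun j hj => hanti hj.le) (htop ▸ h0w)
  · exact Nat.le_zero.1 ((lowerAt_le i).trans_eq (hzero i hi))
  · obtain ⟨a, ha⟩ := heven; exact ⟨a - 1, by omega⟩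

end

def extendByZero {n : ℕ} (d : Fin n → ℕ) (i : ℕ) : ℕ :=
  if h : i < n then d ⟨i, h⟩ else 0

section extendByZero

variable {n : ℕ} (d : Fin n → ℕ)

@[simp] lemma extendByZero_val (i : Fin n) : extendByZero d i = d i := dif_pos i.isLt

lemma extendByZero_of_le {i : ℕ} (hi : n ≤ i) : extendByZero d i = 0 := dif_neg (by omega)

variable {d}

lemma antitone_extendByZero (hd : Antitone d) : Antitone (extendByZero d) := by
  intro i j hij
  by_cases hj : j < n
  · simp only [extendByZero, dif_pos hj, dif_pos (lt_of_le_of_lt hij hj)]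
    exact hd (Fin.mk_le_mk.2 hij)
  · simp [extendByZero, hj]

lemma sum_fin_ite_eq_sum_filter {M : Type*} [AddCommMonoid M] (p : ℕ → Prop) [DecidablePred p]
    (f : ℕ → M) :
    ∑ i : Fin n, (if p i then f i else 0) = ∑ i ∈ range n with p i, f i := by
  rw [sum_filter, Fin.sum_univ_eq_sum_range (fun i => if p i then f i else 0)]

end extendByZero

/-- Erdős–Gallai (sufficiency): a nonincreasing sequence `d₁ ≥ … ≥ d_n` of non-negative
integers with even sum satisfying the Erdős–Gallai inequalities is the degree sequence of a
simple graph on `n` vertices. -/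
theorem erdos_gallai_sufficiency (n : ℕ) (d : Fin n → ℕ)
    (hmono : ∀ i j : Fin n, i ≤ j → d j ≤ d i)
    (heven : Even (∑ i, d i))
    (hEG : ∀ k : ℕ, 1 ≤ k → k ≤ n →
      ∑ i : Fin n, (if (i : ℕ) < k then d i else 0) ≤
        k * (k - 1) + ∑ i : Fin n, (if k ≤ (i : ℕ) then min (d i) k else 0)) :
    ∃ G : SimpleGraph (Fin n), ∀ i, (G.neighborSet i).ncard = d i := by
  have hEG' : ErdosGallaiCondition n (extendByZero d) := by
    intro k hk
    rcases k.eq_zero_or_pos with rfl | hk1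
    · simp
    have := hEG k hk1 hk
    simp only [← extendByZero_val d] at this
    rwa [sum_fin_ite_eq_sum_filter (· < k),
      sum_fin_ite_eq_sum_filter (k ≤ ·) (fun i => min (extendByZero d i) k), range_eq_Ico,
      Ico_filter_lt, Ico_filter_le, min_eq_right hk, max_eq_right k.zero_le,
      ← range_eq_Ico] at this
  have hsum : ∑ i ∈ range n, extendByZero d i = ∑ i, d i := by
    simpa using (Fin.sum_univ_eq_sum_range (extendByZero d) n).symm
  obtain ⟨G, hG⟩ := hEG'.isGraphic (antitone_extendByZero fun i j h => hmono i j h)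
    (fun i => extendByZero_of_le d) (hsum ▸ heven)
  exact ⟨G, fun i => (hG i).trans (extendByZero_val d i)⟩
end

section
/- Let G be a graph, I an independent set in G, and suppose every vertex v outside I with |N(v) ∩ I| = c ≤ a−1 satisfies: the subgraph of G induced by {u ∉ I : N(u) ∩ I = C} ∪ C has independence number at most |C|, where C = N(v) ∩ I. Then for any independent set I* of G, the number of vertices of I* lying in I or having at most a−1 neighbors in I is at most ∑_{c=1}^{a-1} c·(|I| choose c), counting over all subsets C ⊆ I with 1 ≤ |C| ≤ a−1. -/
/-! Send each vertex `v ∉ I` to `C = N(v) ∩ I` and each vertex `v ∈ I` to `{v}`. Every counted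
vertex of `I*` lands on a subset of `I` of size at most `a - 1`, and the vertices of `I*` landing
on `C` form an independent subset of `{u ∉ I | N(u) ∩ I = C} ∪ C`, so there are at most `|C|` of
them: by hypothesis if one of them lies outside `I`, and because they all lie in `C` otherwise.
Summing `|C|` over these subsets gives the bound. -/

open Finset

namespace Finset

theorem sum_card_powerset_filter_card_le {α : Type*} (s : Finset α) (k : ℕ) :
    ∑ t ∈ s.powerset with #t ≤ k, #t = ∑ c ∈ Icc 1 k, c * (#s).choose c := by
  have hfiber : ∀ c ∈ range (k + 1), ∑ t ∈ s.powerset with #t ≤ k ∧ #t = c, #t =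
      c * (#s).choose c := by
    intro c hc
    have : {t ∈ s.powerset | #t ≤ k ∧ #t = c} = powersetCard c s := by
      rw [powersetCard_eq_filter]; ext t; simp only [mem_filter, mem_range] at hc ⊢; grind
    rw [this, sum_congr rfl fun t ht => (mem_powersetCard.1 ht).2, sum_const, card_powersetCard,
      smul_eq_mul, mul_comm]
  calc ∑ t ∈ s.powerset with #t ≤ k, #t
      = ∑ c ∈ range (k + 1), ∑ t ∈ s.powerset with #t ≤ k ∧ #t = c, #t := by
        rw [← sum_fiberwise_of_maps_to (g := card) (t := range (k + 1))]
        · simp only [filter_filter]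
        · intro t ht; simp only [mem_filter] at ht; simp only [mem_range]; omega
    _ = ∑ c ∈ range (k + 1), c * (#s).choose c := sum_congr rfl hfiber
    _ = ∑ c ∈ Icc 1 k, c * (#s).choose c := by
        refine (sum_subset (fun c hc => ?_) fun c hck hc => ?_).symm
        · simp only [mem_Icc, mem_range] at hc ⊢; omega
        · simp only [mem_Icc, mem_range] at hck hc
          rw [show c = 0 by omega, zero_mul]

end Finset

namespace SimpleGraph

variable {V : Type*} [Fintype V] [DecidableEq V] (G : SimpleGraph V) [DecidableRel G.Adj]
  (I : Finset V)

/-- The class `C ⊆ I` with `v ∈ {u ∉ I | N(u) ∩ I = C} ∪ C`; a vertex of `I` is put in the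
singleton class. -/
def neighborTrace (v : V) : Finset V :=
  if v ∈ I then {v} else G.neighborFinset v ∩ I

variable {G I}

theorem neighborTrace_subset (v : V) : G.neighborTrace I v ⊆ I := by
  unfold neighborTrace
  split_ifs with hv
  · exact singleton_subset_iff.2 hv
  · exact inter_subset_right

theorem card_neighborTrace_le {k : ℕ} (hk : 1 ≤ k) {v : V}
    (hv : v ∈ I ∨ #(G.neighborFinset v ∩ I) ≤ k) : #(G.neighborTrace I v) ≤ k := by
  unfold neighborTrace
  split_ifs with hvI
  · rwa [card_singleton]
  · exact hv.resolve_left hvI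

theorem card_le_of_forall_neighborTrace_eq {k : ℕ}
    (hV : ∀ v ∉ I, #(G.neighborFinset v ∩ I) ≤ k →
      ∀ s : Finset V,
        (∀ u ∈ s, (u ∉ I ∧ G.neighborFinset u ∩ I = G.neighborFinset v ∩ I) ∨
          u ∈ G.neighborFinset v ∩ I) →
        ((s : Set V).Pairwise fun x y => ¬G.Adj x y) →
        #s ≤ #(G.neighborFinset v ∩ I))
    {s C : Finset V} (hs : G.IsIndepSet s) (hsC : ∀ u ∈ s, G.neighborTrace I u = C)
    (hC : #C ≤ k) : #s ≤ #C := by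
  by_cases hsI : s ⊆ I
  · refine card_le_card fun u hus => ?_
    have huC := hsC u hus
    rw [neighborTrace, if_pos (hsI hus)] at huC
    exact huC ▸ mem_singleton_self u
  · obtain ⟨v, hvs, hvI⟩ := not_subset.1 hsI
    have hvC : G.neighborFinset v ∩ I = C := by
      simpa only [neighborTrace, if_neg hvI] using hsC v hvs
    subst hvC
    refine hV v hvI hC s (fun u hus => ?_) hs
    have huC := hsC u hus
    by_cases huI : u ∈ I
    · simp only [neighborTrace, if_pos huI] at huC
      exact .inr (huC ▸ mem_singleton_self u)
    · simp only [neighborTrace, if_neg huI] at huC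
      exact .inl ⟨huI, huC⟩

end SimpleGraph

theorem indep_V1_bound_general {V : Type*} [Fintype V] [DecidableEq V]
    (G : SimpleGraph V) [DecidableRel G.Adj] (a : ℕ) (ha : 2 ≤ a)
    (I : Finset V)
    (hV : ∀ v ∉ I, (G.neighborFinset v ∩ I).card ≤ a - 1 →
      ∀ s : Finset V,
        (∀ u ∈ s, (u ∉ I ∧ G.neighborFinset u ∩ I = G.neighborFinset v ∩ I) ∨
          u ∈ G.neighborFinset v ∩ I) →
        ((s : Set V).Pairwise fun x y => ¬G.Adj x y) →
        s.card ≤ (G.neighborFinset v ∩ I).card)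
    (Istar : Finset V) (hIstar : (Istar : Set V).Pairwise fun u v => ¬G.Adj u v) :
    (Istar.filter fun v => v ∈ I ∨ (G.neighborFinset v ∩ I).card ≤ a - 1).card ≤
      ∑ c ∈ Finset.Icc 1 (a - 1), c * I.card.choose c := by
  set S := Istar.filter fun v => v ∈ I ∨ (G.neighborFinset v ∩ I).card ≤ a - 1
  have hmaps : ∀ v ∈ S, G.neighborTrace I v ∈ I.powerset.filter (·.card ≤ a - 1) := by
    intro v hv
    rw [mem_filter, mem_powerset]
    exact ⟨SimpleGraph.neighborTrace_subset v,
      SimpleGraph.card_neighborTrace_le (by omega) (mem_filter.1 hv).2⟩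
  calc #S = ∑ C ∈ I.powerset with #C ≤ a - 1, #{v ∈ S | G.neighborTrace I v = C} :=
        card_eq_sum_card_fiberwise hmaps
    _ ≤ ∑ C ∈ I.powerset with #C ≤ a - 1, #C := by
        refine sum_le_sum fun C hC => SimpleGraph.card_le_of_forall_neighborTrace_eq hV ?_
          (fun u hu => (mem_filter.1 hu).2) (mem_filter.1 hC).2
        exact hIstar.mono (coe_subset.2 ((filter_subset _ _).trans (filter_subset _ _)))
    _ = ∑ c ∈ Finset.Icc 1 (a - 1), c * I.card.choose c := I.sum_card_powerset_filter_card_le _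

/-- Let `I` be a maximal independent set in `G` such that for every vertex `v ∉ I` with at
most `a−1` neighbors in `I`, the subgraph induced by `V_C ∪ C` (with `C = N(v) ∩ I`) has
independence number at most `|C|`. Then, for any independent set `I*`, the number of vertices
of `I*` lying in `I` or having at most `a−1` neighbors in `I` is at most
`∑_{c=1}^{a−1} c·(|I| choose c)`. -/
theorem indep_V1_bound {V : Type*} [Fintype V] [DecidableEq V]
    (G : SimpleGraph V) [DecidableRel G.Adj] (a : ℕ) (ha : 2 ≤ a)
    (I : Finset V) (hI : (I : Set V).Pairwise fun u v => ¬G.Adj u v)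
    (hmax : ∀ v ∉ I, ∃ u ∈ I, G.Adj v u)
    (hV : ∀ v ∉ I, (G.neighborFinset v ∩ I).card ≤ a - 1 →
      ∀ s : Finset V,
        (∀ u ∈ s, (u ∉ I ∧ G.neighborFinset u ∩ I = G.neighborFinset v ∩ I) ∨
          u ∈ G.neighborFinset v ∩ I) →
        ((s : Set V).Pairwise fun x y => ¬G.Adj x y) →
        s.card ≤ (G.neighborFinset v ∩ I).card)
    (Istar : Finset V) (hIstar : (Istar : Set V).Pairwise fun u v => ¬G.Adj u v) :
    (Istar.filter fun v => v ∈ I ∨ (G.neighborFinset v ∩ I).card ≤ a - 1).card ≤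
      ∑ c ∈ Finset.Icc 1 (a - 1), c * I.card.choose c :=
  indep_V1_bound_general G a ha I hV Istar hIstar
end
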